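/- arXiv:1409.8072 — 2 statements merged into one kernel-verified Lean document; each statement's English description precedes it below -/
import Mathlib

section
/- Let a, b, c be real numbers. Then (|a|+|b|)^2 + (ab)^2 ≤ 3·(1 + (a+b)^2 + (ab)^2). -/
theorem stmt_0 (a b : ℝ) :
    (|a| + |b|)^2 + (a*b)^2 ≤ 3 * (1 + (a+b)^2 + (a*b)^2) := by
  rcases abs_cases a with ⟨ha, _⟩ | ⟨ha, _⟩ <;>
  rcases abs_cases b with ⟨hb, _⟩ | ⟨hb, _⟩ <;>
  rw [ha, hb] <;>
  nlinarith [sq_nonneg (a*b), sq_nonneg (a+b), sq_nonneg (a-b), sq_nonneg (a*b-1), sq_nonneg (a*b+1)]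
end

section
/- Let x̃₁, x̃₂ be complex numbers and a ≠ 0. Then |a|·‖(0, |x̃₁| + |x̃₂|, |x̃₁x̃₂|)‖₂ ≤ √3·‖(a, a(x̃₁ + x̃₂), a·x̃₁x̃₂)‖₂. -/
/-!
By the reverse triangle inequality `‖x + y‖ ≥ |‖x‖ - ‖y‖|`, so writing `(‖x‖ + ‖y‖)² = (‖x‖ - ‖y‖)² + 4‖xy‖`
reduces the claim to `4p ≤ 3 + 2p²` for `p = ‖x‖‖y‖`, which holds as `2(p - 1)² + 1 ≥ 0`.
Multiplying through by `‖a‖²` and taking square roots gives the scaled inequality.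
-/

theorem sq_add_add_sq_mul_le_three_mul {r₁ r₂ s : ℝ} (hs : |r₁ - r₂| ≤ s) :
    (r₁ + r₂) ^ 2 + (r₁ * r₂) ^ 2 ≤ 3 * (1 + s ^ 2 + (r₁ * r₂) ^ 2) := by
  have hsq : (r₁ - r₂) ^ 2 ≤ s ^ 2 := by
    simpa only [sq_abs] using pow_le_pow_left₀ (abs_nonneg _) hs 2
  nlinarith [sq_nonneg (r₁ - r₂), sq_nonneg (r₁ * r₂ - 1)]

theorem norm_add_sq_add_norm_mul_sq_le {𝕜 : Type*} [NormedDivisionRing 𝕜] (x y : 𝕜) :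
    (‖x‖ + ‖y‖) ^ 2 + ‖x * y‖ ^ 2 ≤ 3 * (1 + ‖x + y‖ ^ 2 + ‖x * y‖ ^ 2) := by
  have hs : |‖x‖ - ‖y‖| ≤ ‖x + y‖ := by
    simpa only [norm_neg, sub_neg_eq_add] using abs_norm_sub_norm_le x (-y)
  rw [norm_mul]
  exact sq_add_add_sq_mul_le_three_mul hs

theorem stmt_15_general (a xt₁ xt₂ : ℂ) :
    ‖a‖ *
        Real.sqrt ((‖xt₁‖ + ‖xt₂‖)^2 + (‖xt₁ * xt₂‖)^2) ≤
      Real.sqrt 3 *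
        Real.sqrt ((‖a‖)^2 + (‖a * (xt₁ + xt₂)‖)^2 +
          (‖a * (xt₁ * xt₂)‖)^2) := by
  have hscaled : ‖a‖ ^ 2 + ‖a * (xt₁ + xt₂)‖ ^ 2 + ‖a * (xt₁ * xt₂)‖ ^ 2 =
      ‖a‖ ^ 2 * (1 + ‖xt₁ + xt₂‖ ^ 2 + ‖xt₁ * xt₂‖ ^ 2) := by
    simp only [norm_mul]
    ring
  calc ‖a‖ * Real.sqrt ((‖xt₁‖ + ‖xt₂‖) ^ 2 + ‖xt₁ * xt₂‖ ^ 2)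
      = Real.sqrt (‖a‖ ^ 2 * ((‖xt₁‖ + ‖xt₂‖) ^ 2 + ‖xt₁ * xt₂‖ ^ 2)) := by
        rw [Real.sqrt_mul (sq_nonneg _), Real.sqrt_sq (norm_nonneg a)]
    _ ≤ Real.sqrt (3 * (‖a‖ ^ 2 + ‖a * (xt₁ + xt₂)‖ ^ 2 + ‖a * (xt₁ * xt₂)‖ ^ 2)) := by
        rw [hscaled, mul_left_comm]
        gcongr
        exact norm_add_sq_add_norm_mul_sq_le xt₁ xt₂
    _ = _ := Real.sqrt_mul (by norm_num) _

theorem stmt_15 (a xt₁ xt₂ : ℂ) (ha : a ≠ 0) :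
    ‖a‖ *
        Real.sqrt ((‖xt₁‖ + ‖xt₂‖)^2 + (‖xt₁ * xt₂‖)^2) ≤
      Real.sqrt 3 *
        Real.sqrt ((‖a‖)^2 + (‖a * (xt₁ + xt₂)‖)^2 +
          (‖a * (xt₁ * xt₂)‖)^2) :=
  stmt_15_general a xt₁ xt₂
end
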